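/- arXiv:1905.10147 — 4 statements merged into one kernel-verified Lean document; each statement's English description precedes it below -/
import Mathlib

section
/- Let A be a vector space over a field K of characteristic zero equipped with a bilinear multiplication (a,b) ↦ a·b. Define the commutator [a,b] = a·b − b·a and the anticommutator a⋄b = a·b + b·a. Then A is a symmetric Leibniz algebra (i.e. · satisfies both the left Leibniz identity a·(b·c) = (a·b)·c + b·(a·c) and the right Leibniz identity (a·b)·c = a·(b·c) + (a·c)·b) if and only if: [,] is a Lie bracket (antisymmetric and satisfying the Jacobi identity), ⋄ is 2-nilpotent (i.e. (a⋄b)⋄c = 0 = a⋄(b⋄c) for all a,b,c), and a⋄[b,c] = 0 = [a⋄b, c] for all a,b,c ∈ A. -/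
/-- A bilinear multiplication on a vector space `A` over a field `K` of
characteristic zero is a symmetric Leibniz algebra (left and right Leibniz identities)
iff the commutator `[a,b] = a·b − b·a` is a Lie bracket, the anticommutator
`a⋄b = a·b + b·a` is 2-nilpotent, and `a⋄[b,c] = 0 = [a⋄b,c]`. -/
theorem symmetric_leibniz_iff
    (K : Type*) [Field K] [CharZero K]
    (A : Type*) [AddCommGroup A] [Module K A]
    (m : A →ₗ[K] A →ₗ[K] A) :
    ((∀ a b c : A, m a (m b c) = m (m a b) c + m b (m a c)) ∧
     (∀ a b c : A, m (m a b) c = m a (m b c) + m (m a c) b))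
    ↔
    ((∀ a b : A, (m a b - m b a) = -(m b a - m a b)) ∧
     (∀ a b c : A,
        (m a (m b c - m c b) - m (m b c - m c b) a) =
          (m (m a b - m b a) c - m c (m a b - m b a)) +
          (m b (m a c - m c a) - m (m a c - m c a) b)) ∧
     (∀ a b c : A, (m (m a b + m b a) c + m c (m a b + m b a)) = 0) ∧
     (∀ a b c : A, (m a (m b c + m c b) + m (m b c + m c b) a) = 0) ∧
     (∀ a b c : A, (m a (m b c - m c b) + m (m b c - m c b) a) = 0) ∧
     (∀ a b c : A, (m (m a b + m b a) c - m c (m a b + m b a)) = 0)) := by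
  constructor
  · rintro ⟨hL, hR⟩
    refine ⟨fun a b => by abel, fun a b c => ?_, fun a b c => ?_, fun a b c => ?_,
      fun a b c => ?_, fun a b c => ?_⟩ <;>
      simp only [map_add, map_sub, LinearMap.add_apply, LinearMap.sub_apply]
    · linear_combination (norm := module) hL c a b - hL c b a - hR a b c + hR b a c
    · linear_combination (norm := module) - hL a c b - hL b c a - hR a c b - hR b c a
    · linear_combination (norm := module) - hL b c a - hL c b a - hR a b c - hR a c b
    · linear_combination (norm := module) (-2 : K) • hL b a c + hL b c a + hL c b a
        + hR a b c + hR a c b + (-2 : K) • hR b a c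
    · linear_combination (norm := module) (-2 : K) • hL a b c + hL a c b
        + (-2 : K) • hL b a c + hL b c a + hR a c b + hR b c a
  · rintro ⟨-, h2, h3, -, h5, h6⟩
    have h2' := fun a b c : A => h2 a b c
    simp only [map_add, map_sub, LinearMap.add_apply, LinearMap.sub_apply] at h2' h3 h5 h6
    constructor <;> intro a b c
    · linear_combination (norm := module) (4⁻¹ : K) • h2' a b c - (4⁻¹ : K) • h3 a b c
        - (4⁻¹ : K) • h3 a c b + (4⁻¹ : K) • h3 b c a + (4⁻¹ : K) • h5 a b c
        - (4⁻¹ : K) • h5 b a c - (4⁻¹ : K) • h5 c a b - (4⁻¹ : K) • h6 a b c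
        + (4⁻¹ : K) • h6 a c b - (4⁻¹ : K) • h6 b c a
    · linear_combination (norm := module) (-4⁻¹ : K) • h2' a b c + (4⁻¹ : K) • h3 a b c
        - (4⁻¹ : K) • h3 a c b - (4⁻¹ : K) • h3 b c a - (4⁻¹ : K) • h5 a b c
        - (4⁻¹ : K) • h5 b a c + (4⁻¹ : K) • h5 c a b + (4⁻¹ : K) • h6 a b c
        - (4⁻¹ : K) • h6 a c b + (4⁻¹ : K) • h6 b c a
end

section
/- Let D be a vector space over a field K of characteristic zero with two bilinear multiplications * and ∧ such that * is associative, ∧ is 2-nilpotent (i.e. a∧(b∧c) = 0 = (a∧b)∧c for all a,b,c), and a*(b∧c) = (a∧b)*c = (a*b)∧c = a∧(b*c) = 0 for all a,b,c ∈ D. Then the multiplications a⊢b = (a*b + a∧b)/2 and a⊣b = (a*b − a∧b)/2 make D a symmetric dialgebra: ⊢ and ⊣ are associative and (a ∘₁ b) ∘₂ c = a ∘₃ (b ∘₄ c) for all a,b,c ∈ D and all choices ∘ᵢ ∈ {⊢, ⊣}. -/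
/-- Given bilinear multiplications `*` and `∧` on a vector space over a
field of characteristic zero such that `*` is associative, `∧` is 2-nilpotent and all
mixed products vanish, the operations `a⊢b = (a*b + a∧b)/2` and `a⊣b = (a*b − a∧b)/2`
make `D` a symmetric dialgebra. -/
theorem star_wedge_gives_symmetric_dialgebra
    (K : Type*) [Field K] [CharZero K]
    (D : Type*) [AddCommGroup D] [Module K D]
    (s w : D →ₗ[K] D →ₗ[K] D)
    (hassoc : ∀ a b c : D, s (s a b) c = s a (s b c))
    (hnil₁ : ∀ a b c : D, w a (w b c) = 0)
    (hnil₂ : ∀ a b c : D, w (w a b) c = 0)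
    (hmix₁ : ∀ a b c : D, s a (w b c) = 0)
    (hmix₂ : ∀ a b c : D, s (w a b) c = 0)
    (hmix₃ : ∀ a b c : D, w (s a b) c = 0)
    (hmix₄ : ∀ a b c : D, w a (s b c) = 0) :
    ∀ l r : D → D → D,
      l = (fun a b => (2 : K)⁻¹ • (s a b + w a b)) →
      r = (fun a b => (2 : K)⁻¹ • (s a b - w a b)) →
      (∀ a b c : D, l (l a b) c = l a (l b c)) ∧
      (∀ a b c : D, r (r a b) c = r a (r b c)) ∧
      (∀ o₁ o₂ o₃ o₄ : D → D → D,
        o₁ ∈ ({l, r} : Set (D → D → D)) →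
        o₂ ∈ ({l, r} : Set (D → D → D)) →
        o₃ ∈ ({l, r} : Set (D → D → D)) →
        o₄ ∈ ({l, r} : Set (D → D → D)) →
        ∀ a b c : D, o₂ (o₁ a b) c = o₃ a (o₄ b c)) := by
  intro l r hl hr
  have key : ∀ o₁ o₂ o₃ o₄ : D → D → D,
      o₁ ∈ ({l, r} : Set (D → D → D)) →
      o₂ ∈ ({l, r} : Set (D → D → D)) →
      o₃ ∈ ({l, r} : Set (D → D → D)) →
      o₄ ∈ ({l, r} : Set (D → D → D)) →
      ∀ a b c : D, o₂ (o₁ a b) c = o₃ a (o₄ b c) := by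
    subst hl hr
    rintro o₁ o₂ o₃ o₄ (rfl | rfl) (rfl | rfl) (rfl | rfl) (rfl | rfl) a b c <;>
      simp [map_add, map_sub, map_smul, LinearMap.add_apply, LinearMap.sub_apply,
        LinearMap.smul_apply, hassoc, hnil₁, hnil₂, hmix₁, hmix₂, hmix₃, hmix₄]
  exact ⟨fun a b c => key l l l l (by simp) (by simp) (by simp) (by simp) a b c,
    fun a b c => key r r r r (by simp) (by simp) (by simp) (by simp) a b c, key⟩
end

section
/- Let D be a symmetric dialgebra over a field K, with multiplications ⊢ and ⊣. Then the bilinear multiplication a·b := a⊢b − b⊣a makes D a symmetric Leibniz algebra, i.e. · satisfies both the left Leibniz identity a·(b·c) = (a·b)·c + b·(a·c) and the right Leibniz identity (a·b)·c = a·(b·c) + (a·c)·b for all a,b,c ∈ D. -/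
/-- If `(D, ⊢, ⊣)` is a symmetric dialgebra, then `a·b := a⊢b − b⊣a`
makes `D` a symmetric Leibniz algebra (both the left and the right Leibniz identities
hold). -/
theorem symmetric_dialgebra_to_symmetric_leibniz
    (K : Type*) [Field K]
    (D : Type*) [AddCommGroup D] [Module K D]
    (l r : D →ₗ[K] D →ₗ[K] D)
    (hlassoc : ∀ a b c : D, l (l a b) c = l a (l b c))
    (hrassoc : ∀ a b c : D, r (r a b) c = r a (r b c))
    (hsym : ∀ o₁ o₂ o₃ o₄ : D → D → D,
      o₁ ∈ ({fun a b => l a b, fun a b => r a b} : Set (D → D → D)) →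
      o₂ ∈ ({fun a b => l a b, fun a b => r a b} : Set (D → D → D)) →
      o₃ ∈ ({fun a b => l a b, fun a b => r a b} : Set (D → D → D)) →
      o₄ ∈ ({fun a b => l a b, fun a b => r a b} : Set (D → D → D)) →
      ∀ a b c : D, o₂ (o₁ a b) c = o₃ a (o₄ b c)) :
    ∀ m : D → D → D, m = (fun a b => l a b - r b a) →
      (∀ a b c : D, m a (m b c) = m (m a b) c + m b (m a c)) ∧
      (∀ a b c : D, m (m a b) c = m a (m b c) + m (m a c) b) := by
  intro m hm
  subst hm
  have hl : (fun a b => l a b) ∈ ({fun a b => l a b, fun a b => r a b} : Set (D → D → D)) :=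
    Set.mem_insert _ _
  have hr : (fun a b => r a b) ∈ ({fun a b => l a b, fun a b => r a b} : Set (D → D → D)) :=
    Set.mem_insert_of_mem _ rfl
  -- every right-nested double product equals l x (l y z)
  have key : ∀ o₃ o₄ : D → D → D,
      o₃ ∈ ({fun a b => l a b, fun a b => r a b} : Set (D → D → D)) →
      o₄ ∈ ({fun a b => l a b, fun a b => r a b} : Set (D → D → D)) →
      ∀ x y z : D, o₃ x (o₄ y z) = l x (l y z) := by
    intro o₃ o₄ h₃ h₄ x y z
    have := hsym (fun a b => l a b) (fun a b => l a b) o₃ o₄ hl hl h₃ h₄ x y z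
    rw [← this, hlassoc]
  have e1 : ∀ x y z : D, l x (r y z) = l x (l y z) := key _ _ hl hr
  have e2 : ∀ x y z : D, r x (l y z) = l x (l y z) := key _ _ hr hl
  have e3 : ∀ x y z : D, r x (r y z) = l x (l y z) := key _ _ hr hr
  have f1 : ∀ x y z : D, l (r x y) z = l x (l y z) := by
    intro x y z
    have := hsym (fun a b => r a b) (fun a b => l a b) (fun a b => l a b) (fun a b => l a b)
      hr hl hl hl x y z
    simpa using this
  have f2 : ∀ x y z : D, r (l x y) z = l x (l y z) := by
    intro x y z
    have := hsym (fun a b => l a b) (fun a b => r a b) (fun a b => l a b) (fun a b => l a b)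
      hl hr hl hl x y z
    simpa using this
  have f3 : ∀ x y z : D, r (r x y) z = l x (l y z) := by
    intro x y z
    have := hsym (fun a b => r a b) (fun a b => r a b) (fun a b => l a b) (fun a b => l a b)
      hr hr hl hl x y z
    simpa using this
  constructor <;> intro a b c <;>
    simp only [map_sub, LinearMap.sub_apply, hlassoc, e1, e2, e3, f1, f2, f3] <;>
    abel
end

section
/- Let A be a dendriform algebra over a field K with operations ≺ and ≻. Then the multiplication a∘b := a≻b − b≺a is a pre-Lie structure, i.e. (x∘y)∘z − x∘(y∘z) = (y∘x)∘z − y∘(x∘z) for all x,y,z ∈ A. -/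
/-- In a dendriform algebra, `a∘b := a≻b − b≺a` is a pre-Lie
structure: `(x∘y)∘z − x∘(y∘z) = (y∘x)∘z − y∘(x∘z)`. -/
theorem dendriform_to_preLie
    (K : Type*) [Field K]
    (A : Type*) [AddCommGroup A] [Module K A]
    (prec succ : A →ₗ[K] A →ₗ[K] A)
    (hd₁ : ∀ x y z : A, prec (prec x y) z = prec x (prec y z) + prec x (succ y z))
    (hd₂ : ∀ x y z : A, prec (succ x y) z = succ x (prec y z))
    (hd₃ : ∀ x y z : A, succ x (succ y z) = succ (succ x y) z + succ (prec x y) z) :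
    ∀ circ : A → A → A, circ = (fun a b => succ a b - prec b a) →
      ∀ x y z : A,
        circ (circ x y) z - circ x (circ y z) =
          circ (circ y x) z - circ y (circ x z) := by
  intro circ hc x y z
  subst hc
  simp only [map_sub, LinearMap.sub_apply, hd₁, hd₂, hd₃]
  abel
end
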